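/- The poset 𝓕₁ is directed: any two elements of 𝓕₁ have a common upper bound with respect to ≤. Moreover, every element [t, f] of 𝓕₁ has an upper bound of the form [u, 1_n] with u a tree, namely [t, f]·[f, 1_n] = [t, 1_n] where n is the number of leaves of t. -/
import Mathlib


/-- Finite rooted binary trees. -/
inductive T : Type
  | leaf : T
  | node : T → T → T
  deriving DecidableEq

/-- A caret is the tree with two leaves. -/
def caret : T := T.node T.leaf T.leaf

/-- The number of leaves of a tree. -/
def T.leaves : T → ℕ
  | .leaf => 1
  | .node l r => l.leaves + r.leaves

/-- The total number of leaves of a forest (list of trees); the leaves are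
ordered left to right. -/
def leavesList (f : List T) : ℕ := (f.map T.leaves).sum

/-- Replace the `k`-th (`0`-indexed, left to right) leaf of a tree with a caret. -/
def T.expandAt : T → ℕ → T
  | .leaf, _ => caret
  | .node l r, k =>
      if k < l.leaves then .node (l.expandAt k) r
      else .node l (r.expandAt (k - l.leaves))

/-- The `k`-th simple expansion of a forest: replace its `k`-th (`0`-indexed,
left to right) leaf with a caret. -/
def expandListAt : List T → ℕ → List T
  | [], _ => []
  | t :: ts, k =>
      if k < t.leaves then t.expandAt k :: ts
      else t :: expandListAt ts (k - t.leaves)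

/-- `Expands f' f` means that `f'` is an expansion of `f`, i.e. `f'` is obtained
from `f` by applying finitely many simple expansions. -/
inductive Expands : List T → List T → Prop
  | refl (f : List T) : Expands f f
  | step {g f : List T} (k : ℕ) (hk : k < leavesList g) (h : Expands g f) :
      Expands (expandListAt g k) f

/-- The trivial forest `1_n` with `n` roots. -/
def trivialForest (n : ℕ) : List T := List.replicate n T.leaf

theorem T.leaves_pos : ∀ t : T, 0 < t.leaves
  | .leaf => Nat.one_pos
  | .node l r => Nat.add_pos_left l.leaves_pos r.leaves

theorem leavesList_trivialForest (n : ℕ) : leavesList (trivialForest n) = n := by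
  simp [leavesList, trivialForest, T.leaves]

theorem trivialForest_ne_nil {n : ℕ} (hn : n ≠ 0) : trivialForest n ≠ [] := by
  simp [trivialForest, hn]

theorem leavesList_singleton (t : T) : leavesList [t] = t.leaves := by
  simp [leavesList]

theorem expandListAt_length (f : List T) (k : ℕ) :
    (expandListAt f k).length = f.length := by
  induction f generalizing k with
  | nil => rfl
  | cons t ts ih => simp only [expandListAt]; split <;> simp [ih]

/-- A forest pair: a pair of nonempty forests with the same number of leaves. -/
def ForestPair : Type :=
  {p : List T × List T // p.1 ≠ [] ∧ p.2 ≠ [] ∧ leavesList p.1 = leavesList p.2}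

/-- One forest pair is obtained from another by a simple expansion:
the `k`-th simple expansion of a pair applies the `k`-th simple expansion
to both coordinates. -/
def PairStep (p q : ForestPair) : Prop :=
  ∃ k : ℕ, k < leavesList p.val.1 ∧
    q.val = (expandListAt p.val.1 k, expandListAt p.val.2 k)

/-- The groupoid `𝓕`: equivalence classes of forest pairs under the equivalence
relation generated by expansion. -/
def Fgpd : Type := Quot PairStep

/-- The class `[f₋, f₊] ∈ 𝓕` of a forest pair. -/
def Fgpd.mk (p : ForestPair) : Fgpd := Quot.mk PairStep p

/-- `MulDef x y z` asserts that the (partial) groupoid product `x ⬝ y` is defined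
and equal to `z`: there are representatives `x = [f₋, f₊]` and `y = [e₋, e₊]`
with `f₊ = e₋`, and then `z = [f₋, e₊]`. -/
def MulDef (x y z : Fgpd) : Prop :=
  ∃ a b : ForestPair, Fgpd.mk a = x ∧ Fgpd.mk b = y ∧ a.val.2 = b.val.1 ∧
    ∃ h : a.val.1 ≠ [] ∧ b.val.2 ≠ [] ∧ leavesList a.val.1 = leavesList b.val.2,
      Fgpd.mk ⟨(a.val.1, b.val.2), h⟩ = z

/-- A split: an element of `𝓕` of the form `[f, 1]`. -/
def IsSplit (s : Fgpd) : Prop :=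
  ∃ (f : List T) (h : f ≠ [] ∧ trivialForest (leavesList f) ≠ [] ∧
      leavesList f = leavesList (trivialForest (leavesList f))),
    s = Fgpd.mk ⟨(f, trivialForest (leavesList f)), h⟩

/-- The relation `≤` on `𝓕` generated by declaring `x ≤ x ⬝ s` for every split `s`
such that the product is defined. -/
def Fgpd.le : Fgpd → Fgpd → Prop :=
  Relation.ReflTransGen (fun x z => ∃ s : Fgpd, IsSplit s ∧ MulDef x s z)

/-- `𝓕₁ ⊆ 𝓕`: the classes `[t, f]` with `t` a tree (a one-root forest) and `f` a
forest with the same number of leaves as `t`. -/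
def InF1 (e : Fgpd) : Prop :=
  ∃ (t : T) (f : List T) (h : ([t] : List T) ≠ [] ∧ f ≠ [] ∧ leavesList [t] = leavesList f),
    e = Fgpd.mk ⟨([t], f), h⟩

/-- Membership in Thompson's group `F ⊆ 𝓕`: the classes `[t₋, t₊]` with `t₋, t₊` trees. -/
def InF (g : Fgpd) : Prop :=
  ∃ (t u : T) (h : ([t] : List T) ≠ [] ∧ ([u] : List T) ≠ [] ∧ leavesList [t] = leavesList [u]),
    g = Fgpd.mk ⟨([t], [u]), h⟩

section Aux

theorem T.leaves_expandAt : ∀ (t : T) (k : ℕ), k < t.leaves →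
    (t.expandAt k).leaves = t.leaves + 1
  | .leaf, k, _ => rfl
  | .node l r, k, hk => by
    unfold T.expandAt
    split
    · simp only [T.leaves, T.leaves_expandAt l k ‹_›]; omega
    · have hlt : k - l.leaves < r.leaves := by
        simp only [T.leaves] at hk; omega
      simp only [T.leaves, T.leaves_expandAt r _ hlt]; omega

theorem leavesList_expandAt : ∀ (f : List T) (k : ℕ), k < leavesList f →
    leavesList (expandListAt f k) = leavesList f + 1
  | [], k, hk => by simp [leavesList] at hk
  | t :: ts, k, hk => by
    unfold expandListAt
    split
    · simp only [leavesList, List.map_cons, List.sum_cons,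
        T.leaves_expandAt t k ‹_›]; omega
    · have hlt : k - t.leaves < leavesList ts := by
        simp only [leavesList, List.map_cons, List.sum_cons] at hk ⊢; omega
      have h2 := leavesList_expandAt ts _ hlt
      simp only [leavesList, List.map_cons, List.sum_cons] at *
      omega

/-- `w` is an expansion of `t` (trees). -/
def TEx (t w : T) : Prop :=
  Relation.ReflTransGen (fun s s' => ∃ k, k < s.leaves ∧ s' = s.expandAt k) t w

theorem TEx.node_left {l l' : T} (r : T) (h : TEx l l') : TEx (T.node l r) (T.node l' r) := by
  induction h with
  | refl => exact Relation.ReflTransGen.refl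
  | tail _ hstep ih =>
    obtain ⟨k, hk, rfl⟩ := hstep
    refine ih.tail ⟨k, ?_, ?_⟩
    · simp only [T.leaves]; omega
    · simp [T.expandAt, hk]

theorem TEx.node_right {r r' : T} (l : T) (h : TEx r r') : TEx (T.node l r) (T.node l r') := by
  induction h with
  | refl => exact Relation.ReflTransGen.refl
  | tail _ hstep ih =>
    obtain ⟨k, hk, rfl⟩ := hstep
    refine ih.tail ⟨l.leaves + k, ?_, ?_⟩
    · simp only [T.leaves]; omega
    · simp [T.expandAt, Nat.add_sub_cancel_left, (l.leaves_pos).le]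

theorem TEx.of_leaf : ∀ t : T, TEx T.leaf t
  | .leaf => Relation.ReflTransGen.refl
  | .node l r => by
    have h0 : TEx T.leaf (T.node T.leaf T.leaf) :=
      Relation.ReflTransGen.single ⟨0, by simp [T.leaves], rfl⟩
    exact (h0.trans (TEx.node_left T.leaf (TEx.of_leaf l))).trans
      (TEx.node_right l (TEx.of_leaf r))

theorem TEx.common : ∀ t u : T, ∃ w, TEx t w ∧ TEx u w
  | .leaf, u => ⟨u, TEx.of_leaf u, Relation.ReflTransGen.refl⟩
  | .node l r, .leaf => ⟨.node l r, Relation.ReflTransGen.refl, TEx.of_leaf _⟩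
  | .node l r, .node l' r' => by
    obtain ⟨wl, h1, h2⟩ := TEx.common l l'
    obtain ⟨wr, h3, h4⟩ := TEx.common r r'
    exact ⟨.node wl wr,
      ((TEx.node_left r h1).trans (TEx.node_right wl h3)),
      ((TEx.node_left r' h2).trans (TEx.node_right wl h4))⟩

theorem ne_nil_of_expand {g : List T} (hg : g ≠ []) (k : ℕ) : expandListAt g k ≠ [] := by
  intro h
  have := expandListAt_length g k
  rw [h] at this
  exact hg (List.length_eq_zero_iff.mp this.symm)

/-- expanding the pair `([t], g)` along a tree expansion chain. -/
theorem pair_expand {t w : T} (hw : TEx t w) :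
    ∀ (g : List T) (h : ([t] : List T) ≠ [] ∧ g ≠ [] ∧ leavesList [t] = leavesList g),
    ∃ (g' : List T) (h' : ([w] : List T) ≠ [] ∧ g' ≠ [] ∧ leavesList [w] = leavesList g'),
      Fgpd.mk ⟨([t], g), h⟩ = Fgpd.mk ⟨([w], g'), h'⟩ := by
  induction hw with
  | refl => exact fun g h => ⟨g, h, rfl⟩
  | @tail s s' _ hstep ih =>
    intro g h
    obtain ⟨g', h', heq⟩ := ih g h
    obtain ⟨k, hk, rfl⟩ := hstep
    have hk' : k < leavesList [s] := by rwa [leavesList_singleton]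
    have hkg : k < leavesList g' := by rwa [← h'.2.2]
    refine ⟨expandListAt g' k,
      ⟨by simp, ne_nil_of_expand h'.2.1 k, ?_⟩, ?_⟩
    · rw [leavesList_singleton, T.leaves_expandAt s k hk, leavesList_expandAt g' k hkg,
        ← leavesList_singleton s, h'.2.2]
    · rw [heq]
      refine Quot.sound ⟨k, hk', ?_⟩
      simp [expandListAt, hk]

/-- The step lemma: `[t, f] ≤ [t, 1_n]` via the split `[f, 1_n]`, and the product. -/
theorem step_to_trivial (t : T) (f : List T)
    (h : ([t] : List T) ≠ [] ∧ f ≠ [] ∧ leavesList [t] = leavesList f)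
    (h'' : ([t] : List T) ≠ [] ∧ trivialForest t.leaves ≠ [] ∧
      leavesList [t] = leavesList (trivialForest t.leaves)) :
    MulDef (Fgpd.mk ⟨([t], f), h⟩)
      (Fgpd.mk ⟨(f, trivialForest (leavesList f)),
        ⟨h.2.1, trivialForest_ne_nil (by rw [← h.2.2, leavesList_singleton]; exact (t.leaves_pos).ne'),
         by rw [leavesList_trivialForest]⟩⟩)
      (Fgpd.mk ⟨([t], trivialForest t.leaves), h''⟩) := by
  have hft : leavesList f = t.leaves := by rw [← h.2.2, leavesList_singleton]
  refine ⟨⟨([t], f), h⟩, ⟨(f, trivialForest (leavesList f)), _⟩, rfl, rfl, rfl,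
    ⟨h.1, trivialForest_ne_nil (by rw [hft]; exact (t.leaves_pos).ne'),
     by rw [leavesList_trivialForest, h.2.2]⟩, ?_⟩
  have hT : trivialForest (leavesList f) = trivialForest t.leaves := by rw [hft]
  apply congrArg Fgpd.mk
  apply Subtype.ext
  show ([t], trivialForest (leavesList f)) = ([t], trivialForest t.leaves)
  rw [hT]

theorem le_trivial (t : T) (f : List T)
    (h : ([t] : List T) ≠ [] ∧ f ≠ [] ∧ leavesList [t] = leavesList f)
    (h'' : ([t] : List T) ≠ [] ∧ trivialForest t.leaves ≠ [] ∧
      leavesList [t] = leavesList (trivialForest t.leaves)) :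
    Fgpd.le (Fgpd.mk ⟨([t], f), h⟩) (Fgpd.mk ⟨([t], trivialForest t.leaves), h''⟩) := by
  refine Relation.ReflTransGen.single ⟨_, ⟨f, _, rfl⟩, step_to_trivial t f h h''⟩

end Aux

/-- The poset `𝓕₁` is directed: any two elements have a common upper bound in `𝓕₁`.
Moreover every `[t, f] ∈ 𝓕₁` has the upper bound `[t, 1_n]` with
`[t, f] ⬝ [f, 1_n] = [t, 1_n]`, where `n` is the number of leaves of `t`. -/
theorem F1_directed :
    (∀ x y : Fgpd, InF1 x → InF1 y → ∃ z : Fgpd, InF1 z ∧ Fgpd.le x z ∧ Fgpd.le y z) ∧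
    (∀ (t : T) (f : List T)
      (h : ([t] : List T) ≠ [] ∧ f ≠ [] ∧ leavesList [t] = leavesList f),
      MulDef (Fgpd.mk ⟨([t], f), h⟩)
        (Fgpd.mk ⟨(f, trivialForest t.leaves),
          ⟨h.2.1, trivialForest_ne_nil (T.leaves_pos t).ne', by
            rw [leavesList_trivialForest, ← h.2.2, leavesList_singleton]⟩⟩)
        (Fgpd.mk ⟨([t], trivialForest t.leaves),
          ⟨by simp, trivialForest_ne_nil (T.leaves_pos t).ne', by
            rw [leavesList_trivialForest, leavesList_singleton]⟩⟩) ∧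
      Fgpd.le (Fgpd.mk ⟨([t], f), h⟩)
        (Fgpd.mk ⟨([t], trivialForest t.leaves),
          ⟨by simp, trivialForest_ne_nil (T.leaves_pos t).ne', by
            rw [leavesList_trivialForest, leavesList_singleton]⟩⟩)) := by
  
  constructor
  · rintro x y ⟨t, f, h, rfl⟩ ⟨u, g, hg, rfl⟩
    obtain ⟨w, hw1, hw2⟩ := TEx.common t u
    have hw'' : ([w] : List T) ≠ [] ∧ trivialForest w.leaves ≠ [] ∧
        leavesList [w] = leavesList (trivialForest w.leaves) :=
      ⟨by simp, trivialForest_ne_nil w.leaves_pos.ne',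
        by rw [leavesList_trivialForest, leavesList_singleton]⟩
    have ht'' : ([t] : List T) ≠ [] ∧ trivialForest t.leaves ≠ [] ∧
        leavesList [t] = leavesList (trivialForest t.leaves) :=
      ⟨by simp, trivialForest_ne_nil t.leaves_pos.ne',
        by rw [leavesList_trivialForest, leavesList_singleton]⟩
    have hu'' : ([u] : List T) ≠ [] ∧ trivialForest u.leaves ≠ [] ∧
        leavesList [u] = leavesList (trivialForest u.leaves) :=
      ⟨by simp, trivialForest_ne_nil u.leaves_pos.ne',
        by rw [leavesList_trivialForest, leavesList_singleton]⟩
    refine ⟨Fgpd.mk ⟨([w], trivialForest w.leaves), hw''⟩,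
      ⟨w, trivialForest w.leaves, hw'', rfl⟩, ?_, ?_⟩
    · obtain ⟨g', h', heq⟩ := pair_expand hw1 (trivialForest t.leaves) ht''
      exact (le_trivial t f h ht'').trans (heq ▸ le_trivial w g' h' hw'')
    · obtain ⟨g', h', heq⟩ := pair_expand hw2 (trivialForest u.leaves) hu''
      exact (le_trivial u g hg hu'').trans (heq ▸ le_trivial w g' h' hw'')
  · intro t f h
    have hft : leavesList f = t.leaves := by rw [← h.2.2, leavesList_singleton]
    refine ⟨?_, le_trivial t f h _⟩
    exact ⟨⟨([t], f), h⟩, ⟨(f, trivialForest t.leaves), _⟩, rfl, rfl, rfl,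
      ⟨h.1, trivialForest_ne_nil t.leaves_pos.ne',
        by rw [leavesList_trivialForest, leavesList_singleton]⟩, rfl⟩
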